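/- Suppose g : ℕ → ℂ is multiplicative and satisfies Condition (A) for some complex number κ, Condition (B), and Condition (C) with some β ≥ 0. Then for all x ≥ 2, M_g(x) log x − (κ+1) ∫_2^x M_g(t) t^{−1} dt ≪_g (log x)^β. -/

import Mathlib

open Filter Finset
open scoped ENNReal NNReal

/-- `g` is multiplicative: `g 1 = 1` and `g (m*n) = g m * g n` for coprime `m, n`. -/
def IsMult (g : ℕ → ℂ) : Prop :=
  g 1 = 1 ∧ ∀ m n : ℕ, Nat.Coprime m n → g (m * n) = g m * g n

/-- `M_g(x) = ∑_{n ≤ x} g(n)/n`. -/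
noncomputable def Mg (g : ℕ → ℂ) (x : ℝ) : ℂ :=
  ∑ n ∈ Finset.Icc 1 ⌊x⌋₊, g n / (n : ℂ)

/-- The finite set of primes `p ≤ x`. -/
noncomputable def primesLE (x : ℝ) : Finset ℕ :=
  (Finset.range (⌊x⌋₊ + 1)).filter Nat.Prime

/-- Condition (A): `∑_{p ≤ x} g(p) log p / p = κ log x + O(1)` for all `x ≥ 2`. -/
def CondA (g : ℕ → ℂ) (κ : ℂ) : Prop :=
  ∃ C : ℝ, ∀ x : ℝ, 2 ≤ x →
    ‖(∑ p ∈ primesLE x, g p * (Real.log p : ℂ) / (p : ℂ)) - κ * (Real.log x : ℂ)‖ ≤ C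

/-- Condition (B):
`∑_p (|g(p)| log p / p) ∑_{r≥1} |g(p^r)|/p^r + ∑_p ∑_{r≥2} |g(p^r)| log(p^r)/p^r < ∞`. -/
def CondB (g : ℕ → ℂ) : Prop :=
  (∑' p : Nat.Primes,
      ((‖g (p : ℕ)‖₊ : ℝ≥0∞) * ENNReal.ofReal (Real.log (p : ℕ)) / ((p : ℕ) : ℝ≥0∞)) *
        ∑' r : ℕ, (‖g ((p : ℕ) ^ (r + 1))‖₊ : ℝ≥0∞) / (((p : ℕ) ^ (r + 1) : ℕ) : ℝ≥0∞))
    + (∑' p : Nat.Primes, ∑' r : ℕ,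
        (‖g ((p : ℕ) ^ (r + 2))‖₊ : ℝ≥0∞) *
          ENNReal.ofReal (Real.log ((p : ℕ) ^ (r + 2) : ℕ)) /
          (((p : ℕ) ^ (r + 2) : ℕ) : ℝ≥0∞)) < ⊤

/-- Condition (C): `∏_{p ≤ x} (1 + |g(p)|/p) ≪ (log x)^β` for all `x ≥ 2`. -/
def CondC (g : ℕ → ℂ) (β : ℝ) : Prop :=
  ∃ C : ℝ, ∀ x : ℝ, 2 ≤ x →
    ∏ p ∈ primesLE x, (1 + ‖g p‖ / (p : ℝ)) ≤ C * Real.log x ^ β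

/-- The Euler factor `(1 - 1/p)^κ (1 + g(p)/p + g(p²)/p² + ⋯)` (principal branch power). -/
noncomputable def eulerFactor (g : ℕ → ℂ) (κ : ℂ) (p : ℕ) : ℂ :=
  (1 - 1 / (p : ℂ)) ^ κ * ∑' r : ℕ, g (p ^ r) / (p : ℂ) ^ r


/-!
Write `M(x) log x = ∑_{n≤x} g(n) log n / n + ∑_{n≤x} g(n) log(x/n) / n`; the second sum is
`∫_2^x M(t) dt / t + log 2`. Writing `log n = ∑_{p^r ∥ n} r log p` and `n = p^r m` with `p ∤ m`,
the first sum becomes `∑_{p≤x} g(p) log p / p · M(x/p)` up to the terms with `r ≥ 2` and those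
with `p ∣ m`, both `≪ L(x) := ∑_{n≤x} |g(n)|/n` by (B). Exchanging the order of summation,
`∑_{p≤x} g(p) log p / p · M(x/p) = ∑_{m≤x} g(m)/m ∑_{p≤x/m} g(p) log p / p`, which is
`κ ∑_{m≤x} g(m) log(x/m) / m + O(L(x))` by (A). Finally the Euler product gives
`L(x) ≤ ∏_{p≤x} ∑_r |g(p^r)|/p^r ≪ ∏_{p≤x} (1 + |g(p)|/p) ≪ (log x)^β` by (B) and (C).
-/

open Real MeasureTheory

lemma mem_primesLE {x : ℝ} (hx : 0 ≤ x) {p : ℕ} : p ∈ primesLE x ↔ p.Prime ∧ (p : ℝ) ≤ x := by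
  simp only [primesLE, mem_filter, mem_range, Nat.lt_succ_iff, Nat.le_floor_iff hx]
  tauto

lemma prime_of_mem_primesLE {x : ℝ} {p : ℕ} (hp : p ∈ primesLE x) : p.Prime :=
  (mem_filter.mp hp).2

lemma mem_Icc_one_floor {x : ℝ} (hx : 0 ≤ x) {n : ℕ} :
    n ∈ Icc 1 ⌊x⌋₊ ↔ 1 ≤ n ∧ (n : ℝ) ≤ x := by
  rw [mem_Icc, Nat.le_floor_iff hx]

lemma integral_indicator_Ici_inv {a c x : ℝ} (ha : 0 < a) (hax : a ≤ x) (hcx : c ≤ x) :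
    ∫ t in a..x, (Set.Ici c).indicator (fun t => t⁻¹) t = log x - log (max a c) := by
  have hmax : 0 < max a c := lt_max_of_lt_left ha
  rw [intervalIntegral.integral_congr_ae
      ((indicator_ae_eq_of_ae_eq_set Ioi_ae_eq_Ici).symm.mono fun _ h _ => h),
    intervalIntegral.integral_of_le hax, setIntegral_indicator measurableSet_Ioi,
    Set.Ioc_inter_Ioi, ← intervalIntegral.integral_of_le (max_le hax hcx),
    integral_inv_of_pos hmax (hmax.trans_le (max_le hax hcx)), log_div (by linarith) hmax.ne']

lemma intervalIntegrable_indicator_Ici_inv {a x : ℝ} (ha : 0 < a) (hax : a ≤ x) (c : ℝ) :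
    IntervalIntegrable (fun t => (((Set.Ici c).indicator (fun t => t⁻¹) t : ℝ) : ℂ))
      volume a x := by
  have h : IntervalIntegrable (fun t : ℝ => t⁻¹) volume a x :=
    intervalIntegral.intervalIntegrable_inv
      (fun t ht => by rw [Set.uIcc_of_le hax] at ht; exact (ha.trans_le ht.1).ne') continuousOn_id
  exact ⟨(h.1.indicator measurableSet_Ici).ofReal, (h.2.indicator measurableSet_Ici).ofReal⟩

lemma Mg_div_eq_sum_indicator (g : ℕ → ℂ) {x t : ℝ} (ht : t ∈ Set.uIcc 2 x) (hx : 2 ≤ x) :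
    Mg g t / (t : ℂ) =
      ∑ n ∈ Icc 1 ⌊x⌋₊, g n / n * (((Set.Ici (n : ℝ)).indicator (fun t => t⁻¹) t : ℝ) : ℂ) := by
  rw [Set.uIcc_of_le hx] at ht
  have ht0 : 0 ≤ t := by linarith [ht.1]
  have hfilter : Icc 1 ⌊t⌋₊ = (Icc 1 ⌊x⌋₊).filter (fun n : ℕ => (n : ℝ) ≤ t) := by
    ext n
    simp only [mem_filter, mem_Icc_one_floor ht0, mem_Icc_one_floor (ht0.trans ht.2)]
    exact ⟨fun h => ⟨⟨h.1, h.2.trans ht.2⟩, h.2⟩, fun h => ⟨h.1.1, h.2⟩⟩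
  rw [Mg, hfilter, sum_filter, sum_div]
  refine sum_congr rfl fun n _ => ?_
  by_cases hn : (n : ℝ) ≤ t
  · simp [hn, div_eq_mul_inv]
  · simp [hn]

lemma integral_Mg_div (g : ℕ → ℂ) {x : ℝ} (hx : 2 ≤ x) :
    ∫ t in (2 : ℝ)..x, Mg g t / (t : ℂ) =
      ∑ n ∈ Icc 1 ⌊x⌋₊, g n / n * (log (x / n) : ℂ) - log 2 * g 1 := by
  have hterm : ∀ n ∈ Icc 1 ⌊x⌋₊, g n / n * ((log x - log (max 2 n) : ℝ) : ℂ) =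
      g n / n * (log (x / n) : ℂ) - if n = 1 then log 2 * g 1 else 0 := by
    intro n hn
    obtain ⟨hn1, hnx⟩ := (mem_Icc_one_floor (by linarith)).mp hn
    rcases hn1.eq_or_lt with rfl | hn2
    · simp only [Nat.cast_one, div_one, Nat.one_le_ofNat, sup_of_le_left, Complex.ofReal_sub,
        ↓reduceIte]
      ring
    · have h2n : (2 : ℝ) ≤ n := by exact_mod_cast hn2
      rw [max_eq_right h2n, if_neg hn2.ne', sub_zero, log_div (by linarith) (by linarith)]
  have h1 : 1 ∈ Icc 1 ⌊x⌋₊ := mem_Icc.mpr ⟨le_rfl, Nat.le_floor (by norm_num; linarith)⟩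
  rw [intervalIntegral.integral_congr fun t ht => Mg_div_eq_sum_indicator g ht hx,
    intervalIntegral.integral_finsetSum fun n _ =>
      (intervalIntegrable_indicator_Ici_inv two_pos hx _).const_mul _]
  simp_rw [intervalIntegral.integral_const_mul, intervalIntegral.integral_ofReal]
  rw [sum_congr rfl fun n hn => by
      rw [integral_indicator_Ici_inv two_pos hx ((mem_Icc_one_floor (by linarith)).mp hn).2],
    sum_congr rfl hterm, sum_sub_distrib, sum_ite_eq' _ 1, if_pos h1]

noncomputable def sumCoprime {K : Type*} [Field K] (h : ℕ → K) (p : ℕ) (y : ℝ) : K :=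
  ∑ m ∈ (Icc 1 ⌊y⌋₊).filter (fun m => ¬ p ∣ m), h m / m

lemma sum_filter_factorization_eq {M : Type*} [AddCommMonoid M] (f : ℕ → M) {p : ℕ}
    (hp : p.Prime) {x : ℝ} (hx : 0 ≤ x) (r : ℕ) :
    ∑ n ∈ (Icc 1 ⌊x⌋₊).filter (fun n => n.factorization p = r), f n =
      ∑ m ∈ (Icc 1 ⌊x / (p : ℝ) ^ r⌋₊).filter (fun m => ¬ p ∣ m), f (p ^ r * m) := by
  have hpr : (0 : ℝ) < (p : ℝ) ^ r := by have := hp.pos; positivity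
  have hle : ∀ m : ℕ, ((m : ℝ) ≤ x / (p : ℝ) ^ r ↔ ((p ^ r * m : ℕ) : ℝ) ≤ x) := fun m => by
    rw [le_div_iff₀ hpr]; push_cast; rw [mul_comm]
  symm
  refine sum_nbij' (fun m => p ^ r * m) (fun n => n / p ^ r) ?_ ?_ ?_ ?_ (fun _ _ => rfl)
  · intro m hm
    simp only [mem_filter, mem_Icc_one_floor (div_nonneg hx hpr.le)] at hm
    obtain ⟨⟨hm1, hmx⟩, hpm⟩ := hm
    simp only [mem_filter, mem_Icc_one_floor hx]
    refine ⟨⟨Nat.mul_pos (pow_pos hp.pos r) hm1, (hle m).mp hmx⟩, ?_⟩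
    rw [Nat.factorization_mul (pow_ne_zero r hp.ne_zero) (by omega), Finsupp.add_apply,
      hp.factorization_pow, Finsupp.single_eq_same, Nat.factorization_eq_zero_of_not_dvd hpm,
      add_zero]
  · intro n hn
    simp only [mem_filter, mem_Icc_one_floor hx] at hn
    obtain ⟨⟨hn1, hnx⟩, rfl⟩ := hn
    have hnm := Nat.ordProj_mul_ordCompl_eq_self n p
    simp only [mem_filter, mem_Icc_one_floor (div_nonneg hx hpr.le), hle, hnm]
    refine ⟨⟨Nat.one_le_iff_ne_zero.mpr fun h0 => ?_, hnx⟩, Nat.not_dvd_ordCompl hp (by omega)⟩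
    rw [h0, mul_zero] at hnm
    omega
  · intro m _
    exact Nat.mul_div_cancel_left m (pow_pos hp.pos r)
  · intro n hn
    rw [← (mem_filter.mp hn).2]
    exact Nat.ordProj_mul_ordCompl_eq_self n p

lemma sum_factorization_mul_eq {K : Type*} [Field K] {h : ℕ → K}
    (hmul : ∀ m n : ℕ, m.Coprime n → h (m * n) = h m * h n) (w : ℕ → K) {p : ℕ}
    (hp : p.Prime) {x : ℝ} (hx : 0 ≤ x) {N : ℕ} (hN : ⌊x⌋₊ ≤ N) :
    ∑ n ∈ Icc 1 ⌊x⌋₊, w (n.factorization p) * h n / n =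
      ∑ r ∈ range N, w r * (h (p ^ r) / (p : K) ^ r) * sumCoprime h p (x / (p : ℝ) ^ r) := by
  have hmaps : ∀ n ∈ Icc 1 ⌊x⌋₊, n.factorization p ∈ range N := fun n hn => by
    rw [mem_Icc] at hn
    exact mem_range.mpr ((Nat.factorization_lt p (by omega)).trans_le (hn.2.trans hN))
  rw [← sum_fiberwise_of_maps_to hmaps]
  refine sum_congr rfl fun r _ => ?_
  calc ∑ n ∈ (Icc 1 ⌊x⌋₊).filter (fun n => n.factorization p = r),
        w (n.factorization p) * h n / n
      = w r * ∑ n ∈ (Icc 1 ⌊x⌋₊).filter (fun n => n.factorization p = r), h n / n := by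
        rw [mul_sum]
        exact sum_congr rfl fun n hn => by rw [(mem_filter.mp hn).2, mul_div_assoc]
    _ = w r * ∑ m ∈ (Icc 1 ⌊x / (p : ℝ) ^ r⌋₊).filter (fun m => ¬ p ∣ m),
          h (p ^ r) / (p : K) ^ r * (h m / m) := by
        rw [sum_filter_factorization_eq _ hp hx r]
        refine congrArg _ (sum_congr rfl fun m hm => ?_)
        have hcop : (p ^ r).Coprime m :=
          ((Nat.Prime.coprime_iff_not_dvd hp).mpr (mem_filter.mp hm).2).pow_left r
        rw [hmul _ _ hcop, Nat.cast_mul, Nat.cast_pow, div_mul_div_comm]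
    _ = _ := by rw [sumCoprime, ← mul_sum, mul_assoc]

noncomputable def normMg (g : ℕ → ℂ) (x : ℝ) : ℝ :=
  ∑ n ∈ Icc 1 ⌊x⌋₊, ‖g n‖ / n

lemma normMg_nonneg (g : ℕ → ℂ) (x : ℝ) : 0 ≤ normMg g x :=
  sum_nonneg fun _ _ => by positivity

lemma normMg_mono (g : ℕ → ℂ) {x y : ℝ} (hyx : y ≤ x) : normMg g y ≤ normMg g x :=
  sum_le_sum_of_subset_of_nonneg (Icc_subset_Icc_right (Nat.floor_mono hyx))
    fun _ _ _ => by positivity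

lemma sumCoprime_norm_le (g : ℕ → ℂ) (p : ℕ) {x y : ℝ} (hyx : y ≤ x) :
    sumCoprime (fun n => ‖g n‖) p y ≤ normMg g x :=
  (sum_le_sum_of_subset_of_nonneg (filter_subset _ _) fun _ _ _ => by positivity).trans
    (normMg_mono g hyx)

lemma norm_sumCoprime_le (g : ℕ → ℂ) (p : ℕ) {x y : ℝ} (hyx : y ≤ x) :
    ‖sumCoprime g p y‖ ≤ normMg g x := by
  refine (norm_sum_le _ _).trans (le_of_eq_of_le ?_ (sumCoprime_norm_le g p hyx))
  simp only [sumCoprime, norm_div, Complex.norm_natCast]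

lemma norm_sum_mul_sumCoprime_le {g : ℕ → ℂ} {ι : Type*} (s : Finset ι) (c : ι → ℂ) (p : ℕ)
    (y : ι → ℝ) {x : ℝ} (hy : ∀ i ∈ s, y i ≤ x) :
    ‖∑ i ∈ s, c i * sumCoprime g p (y i)‖ ≤ (∑ i ∈ s, ‖c i‖) * normMg g x := by
  rw [sum_mul]
  refine (norm_sum_le _ _).trans (sum_le_sum fun i hi => ?_)
  rw [norm_mul]
  exact mul_le_mul_of_nonneg_left (norm_sumCoprime_le g p (hy i hi)) (norm_nonneg _)

lemma norm_sum_filter_dvd_le {g : ℕ → ℂ} (hg : IsMult g) {p : ℕ} (hp : p.Prime) {x y : ℝ}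
    (hy : 0 ≤ y) (hyx : y ≤ x) :
    ‖∑ m ∈ (Icc 1 ⌊y⌋₊).filter (fun m => p ∣ m), g m / m‖ ≤
      (∑ r ∈ range ⌊y⌋₊, ‖g (p ^ (r + 1))‖ / (p : ℝ) ^ (r + 1)) * normMg g x := by
  have hmul : ∀ m n : ℕ, m.Coprime n → ‖g (m * n)‖ = ‖g m‖ * ‖g n‖ := fun m n h => by
    rw [hg.2 m n h, norm_mul]
  have hpow : ∀ r : ℕ, y / (p : ℝ) ^ r ≤ x := fun r =>
    (div_le_self hy (one_le_pow₀ (by exact_mod_cast hp.one_lt.le))).trans hyx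
  calc ‖∑ m ∈ (Icc 1 ⌊y⌋₊).filter (fun m => p ∣ m), g m / m‖
      ≤ ∑ m ∈ (Icc 1 ⌊y⌋₊).filter (fun m => p ∣ m), ‖g m‖ / m := by
        refine (norm_sum_le _ _).trans_eq (sum_congr rfl fun m _ => ?_)
        rw [norm_div, Complex.norm_natCast]
    _ = ∑ m ∈ Icc 1 ⌊y⌋₊, (if m.factorization p = 0 then 0 else 1) * ‖g m‖ / m := by
        rw [sum_filter]
        refine sum_congr rfl fun m hm => ?_
        have hm0 : m ≠ 0 := by rw [mem_Icc] at hm; omega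
        by_cases hpm : p ∣ m
        · simp [hpm, (hp.factorization_pos_of_dvd hm0 hpm).ne']
        · simp [hpm, Nat.factorization_eq_zero_of_not_dvd hpm]
    _ = ∑ r ∈ range ⌊y⌋₊, ‖g (p ^ (r + 1))‖ / (p : ℝ) ^ (r + 1) *
          sumCoprime (fun n => ‖g n‖) p (y / (p : ℝ) ^ (r + 1)) := by
        refine (sum_factorization_mul_eq (h := fun n => ‖g n‖) hmul
          (fun r => if r = 0 then 0 else 1) hp hy (Nat.le_succ _)).trans ?_
        rw [sum_range_succ']
        simp
    _ ≤ _ := by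
        rw [sum_mul]
        exact sum_le_sum fun r _ => mul_le_mul_of_nonneg_left
          (sumCoprime_norm_le g p (hpow _)) (by positivity)

lemma log_eq_sum_primesLE {x : ℝ} (hx : 0 ≤ x) {n : ℕ} (hn : n ∈ Icc 1 ⌊x⌋₊) :
    log n = ∑ p ∈ primesLE x, n.factorization p * log p := by
  obtain ⟨hn1, hnx⟩ := (mem_Icc_one_floor hx).mp hn
  have hsub : n.factorization.support ⊆ primesLE x := fun p hp => by
    rw [Nat.support_factorization] at hp
    refine (mem_primesLE hx).mpr ⟨Nat.prime_of_mem_primeFactors hp, le_trans ?_ hnx⟩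
    exact_mod_cast Nat.le_of_dvd hn1 (Nat.dvd_of_mem_primeFactors hp)
  rw [log_nat_eq_sum_factorization, Finsupp.sum_of_support_subset _ hsub _ fun _ _ => by simp]

lemma sum_mul_log_eq {g : ℕ → ℂ} (hg : IsMult g) {x : ℝ} (hx : 2 ≤ x) :
    ∑ n ∈ Icc 1 ⌊x⌋₊, g n / n * log n =
      ∑ p ∈ primesLE x, log p * (g p / p * sumCoprime g p (x / p)) +
      ∑ p ∈ primesLE x, log p * ∑ r ∈ range (⌊x⌋₊ - 2),
        ((r + 2 : ℕ) : ℂ) * (g (p ^ (r + 2)) / (p : ℂ) ^ (r + 2)) *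
          sumCoprime g p (x / (p : ℝ) ^ (r + 2)) := by
  have hx0 : 0 ≤ x := by linarith
  obtain ⟨N, hN⟩ : ∃ N, ⌊x⌋₊ = N + 2 :=
    ⟨⌊x⌋₊ - 2, by have : 2 ≤ ⌊x⌋₊ := Nat.le_floor (by exact_mod_cast hx); omega⟩
  calc ∑ n ∈ Icc 1 ⌊x⌋₊, g n / n * log n
      = ∑ p ∈ primesLE x, log p * ∑ n ∈ Icc 1 ⌊x⌋₊, (n.factorization p : ℂ) * g n / n := by
        simp_rw [mul_sum]
        rw [sum_comm]
        refine sum_congr rfl fun n hn => ?_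
        rw [log_eq_sum_primesLE hx0 hn]
        push_cast
        rw [mul_sum]
        exact sum_congr rfl fun p _ => by ring
    _ = _ := by
        rw [← sum_add_distrib]
        refine sum_congr rfl fun p hp => ?_
        rw [sum_factorization_mul_eq hg.2 Nat.cast (prime_of_mem_primesLE hp) hx0 le_rfl, hN,
          sum_range_succ', sum_range_succ', Nat.add_sub_cancel]
        simp only [add_assoc, Nat.reduceAdd, Nat.cast_add, Nat.cast_ofNat, Nat.cast_zero,
          zero_mul, add_zero, zero_add, Nat.cast_one, one_mul, pow_one]
        ring

lemma sum_primesLE_sum_Icc_comm {M : Type*} [AddCommMonoid M] (f : ℕ → ℕ → M) {x : ℝ}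
    (hx : 0 ≤ x) :
    ∑ p ∈ primesLE x, ∑ m ∈ Icc 1 ⌊x / p⌋₊, f p m =
      ∑ m ∈ Icc 1 ⌊x⌋₊, ∑ p ∈ primesLE (x / m), f p m := by
  refine sum_comm' fun p m => ?_
  constructor
  · rintro ⟨hp, hm⟩
    obtain ⟨hpp, hpx⟩ := (mem_primesLE hx).mp hp
    have hp0 : (0 : ℝ) < p := by exact_mod_cast hpp.pos
    obtain ⟨hm1, hmx⟩ := (mem_Icc_one_floor (by positivity)).mp hm
    have hm0 : (0 : ℝ) < m := by exact_mod_cast hm1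
    rw [le_div_iff₀ hp0] at hmx
    refine ⟨(mem_primesLE (by positivity)).mpr ⟨hpp, ?_⟩, (mem_Icc_one_floor hx).mpr ⟨hm1, ?_⟩⟩
    · rw [le_div_iff₀ hm0]; linarith
    · nlinarith [(by exact_mod_cast hpp.one_le : (1 : ℝ) ≤ p)]
  · rintro ⟨hp, hm⟩
    obtain ⟨hm1, hmx⟩ := (mem_Icc_one_floor hx).mp hm
    have hm0 : (0 : ℝ) < m := by exact_mod_cast hm1
    obtain ⟨hpp, hpx⟩ := (mem_primesLE (by positivity)).mp hp
    have hp0 : (0 : ℝ) < p := by exact_mod_cast hpp.pos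
    rw [le_div_iff₀ hm0] at hpx
    refine ⟨(mem_primesLE hx).mpr ⟨hpp, ?_⟩, (mem_Icc_one_floor (by positivity)).mpr ⟨hm1, ?_⟩⟩
    · nlinarith [(by exact_mod_cast hm1 : (1 : ℝ) ≤ m)]
    · rw [le_div_iff₀ hp0]; linarith

noncomputable def primeLogSum (g : ℕ → ℂ) (y : ℝ) : ℂ :=
  ∑ p ∈ primesLE y, g p * (log p : ℂ) / p

lemma sum_mul_Mg_eq (g : ℕ → ℂ) {x : ℝ} (hx : 0 ≤ x) :
    ∑ p ∈ primesLE x, g p * (log p : ℂ) / p * Mg g (x / p) =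
      ∑ m ∈ Icc 1 ⌊x⌋₊, g m / m * primeLogSum g (x / m) := by
  simp_rw [Mg, primeLogSum, mul_sum]
  rw [sum_primesLE_sum_Icc_comm _ hx]
  exact sum_congr rfl fun _ _ => sum_congr rfl fun _ _ => by ring

lemma CondA.exists_bound_of_one_le {g : ℕ → ℂ} {κ : ℂ} (hA : CondA g κ) :
    ∃ C ≥ 0, ∀ y : ℝ, 1 ≤ y → ‖primeLogSum g y - κ * log y‖ ≤ C := by
  obtain ⟨C, hC⟩ := hA
  refine ⟨max C (‖κ‖ * log 2), by positivity, fun y hy => ?_⟩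
  rcases le_or_gt 2 y with h2 | h2
  · exact (hC y h2).trans (le_max_left _ _)
  have hempty : primeLogSum g y = 0 := sum_eq_zero fun p hp => by
    have := (prime_of_mem_primesLE hp).two_le
    have : (p : ℝ) ≤ y := ((mem_primesLE (by linarith)).mp hp).2
    have : (2 : ℝ) ≤ p := by exact_mod_cast ‹2 ≤ p›
    linarith
  rw [hempty, zero_sub, norm_neg, norm_mul, Complex.norm_real, Real.norm_of_nonneg (log_nonneg hy)]
  exact (mul_le_mul_of_nonneg_left (log_le_log (by linarith) h2.le) (norm_nonneg κ)).trans
    (le_max_right _ _)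

lemma norm_sum_mul_Mg_sub_le {g : ℕ → ℂ} {κ : ℂ} {C : ℝ}
    (hA : ∀ y : ℝ, 1 ≤ y → ‖primeLogSum g y - κ * log y‖ ≤ C) {x : ℝ} (hx : 0 ≤ x) :
    ‖∑ p ∈ primesLE x, g p * (log p : ℂ) / p * Mg g (x / p) -
        κ * ∑ n ∈ Icc 1 ⌊x⌋₊, g n / n * (log (x / n) : ℂ)‖ ≤ C * normMg g x := by
  rw [sum_mul_Mg_eq g hx, mul_sum, ← sum_sub_distrib, normMg, mul_sum]
  refine (norm_sum_le _ _).trans (sum_le_sum fun m hm => ?_)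
  obtain ⟨hm1, hmx⟩ := (mem_Icc_one_floor hx).mp hm
  have hm0 : (0 : ℝ) < m := by exact_mod_cast hm1
  rw [show g m / m * primeLogSum g (x / m) - κ * (g m / m * (log (x / m) : ℂ)) =
      g m / m * (primeLogSum g (x / m) - κ * log (x / m)) by ring,
    norm_mul, norm_div, Complex.norm_natCast, mul_comm C]
  exact mul_le_mul_of_nonneg_left (hA _ ((one_le_div hm0).mpr hmx)) (by positivity)

lemma sum_le_toReal_tsum_primes {P : Finset ℕ} (hP : ∀ p ∈ P, p.Prime) {t : ℕ → ℝ}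
    {Φ : ℕ → ℝ≥0∞} (hΦ : ∑' p : Nat.Primes, Φ p ≠ ⊤)
    (ht : ∀ p : ℕ, p.Prime → ENNReal.ofReal (t p) ≤ Φ p) :
    ∑ p ∈ P, t p ≤ (∑' p : Nat.Primes, Φ p).toReal := by
  have hfin : ∑ p ∈ P, ENNReal.ofReal (t p) ≤ ∑' p : Nat.Primes, Φ p :=
    calc ∑ p ∈ P, ENNReal.ofReal (t p) ≤ ∑ p ∈ P, Φ p := sum_le_sum fun p hp => ht p (hP p hp)
      _ = ∑ p ∈ P.subtype Nat.Prime, Φ p := (sum_subtype_of_mem Φ hP).symm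
      _ ≤ ∑' p : Nat.Primes, Φ p := ENNReal.sum_le_tsum _
  calc ∑ p ∈ P, t p ≤ ∑ p ∈ P, (ENNReal.ofReal (t p)).toReal :=
        sum_le_sum fun p _ => (le_max_left _ _).trans_eq ENNReal.toReal_ofReal'.symm
    _ = (∑ p ∈ P, ENNReal.ofReal (t p)).toReal :=
        (ENNReal.toReal_sum fun _ _ => ENNReal.ofReal_ne_top).symm
    _ ≤ _ := ENNReal.toReal_mono hΦ hfin

lemma ofReal_norm_div_pow (g : ℕ → ℂ) {p : ℕ} (hp : 0 < p) (k : ℕ) :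
    ENNReal.ofReal (‖g (p ^ k)‖ / (p : ℝ) ^ k) = (‖g (p ^ k)‖₊ : ℝ≥0∞) / ((p ^ k : ℕ) : ℝ≥0∞) := by
  rw [ENNReal.ofReal_div_of_pos (by positivity), ofReal_norm, enorm_eq_nnnorm, ← Nat.cast_pow,
    ENNReal.ofReal_natCast]

namespace CondB

noncomputable def firstTerm (g : ℕ → ℂ) (p : ℕ) : ℝ≥0∞ :=
  ((‖g p‖₊ : ℝ≥0∞) * ENNReal.ofReal (log p) / (p : ℝ≥0∞)) *
    ∑' r : ℕ, (‖g (p ^ (r + 1))‖₊ : ℝ≥0∞) / ((p ^ (r + 1) : ℕ) : ℝ≥0∞)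

noncomputable def secondTerm (g : ℕ → ℂ) (p : ℕ) : ℝ≥0∞ :=
  ∑' r : ℕ, (‖g (p ^ (r + 2))‖₊ : ℝ≥0∞) * ENNReal.ofReal (log ((p ^ (r + 2) : ℕ) : ℝ)) /
    ((p ^ (r + 2) : ℕ) : ℝ≥0∞)

variable {g : ℕ → ℂ}

lemma tsum_firstTerm_ne_top (hB : CondB g) : ∑' p : Nat.Primes, firstTerm g p ≠ ⊤ :=
  (ENNReal.add_lt_top.mp hB).1.ne

lemma tsum_secondTerm_ne_top (hB : CondB g) : ∑' p : Nat.Primes, secondTerm g p ≠ ⊤ :=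
  (ENNReal.add_lt_top.mp hB).2.ne

lemma exists_sum_first_le (hB : CondB g) :
    ∃ B ≥ 0, ∀ (x : ℝ) (K : ℕ → ℕ), ∑ p ∈ primesLE x, log p * (‖g p‖ / p) *
      ∑ r ∈ range (K p), ‖g (p ^ (r + 1))‖ / (p : ℝ) ^ (r + 1) ≤ B := by
  refine ⟨_, ENNReal.toReal_nonneg, fun x K =>
    sum_le_toReal_tsum_primes (fun p => prime_of_mem_primesLE) (tsum_firstTerm_ne_top hB)
      fun p hp => ?_⟩
  have hlog : 0 ≤ log p := log_nonneg (by exact_mod_cast hp.one_le)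
  rw [ENNReal.ofReal_mul (by positivity), ENNReal.ofReal_mul hlog,
    ENNReal.ofReal_div_of_pos (by exact_mod_cast hp.pos), ofReal_norm, enorm_eq_nnnorm,
    ENNReal.ofReal_natCast, ENNReal.ofReal_sum_of_nonneg fun _ _ => by positivity, firstTerm]
  refine mul_le_mul' (le_of_eq (by simp only [div_eq_mul_inv]; ring)) ?_
  exact (sum_le_sum fun r _ => (ofReal_norm_div_pow g hp.pos _).le).trans (ENNReal.sum_le_tsum _)

lemma exists_sum_second_le (hB : CondB g) :
    ∃ B ≥ 0, ∀ (x : ℝ) (N : ℕ), ∑ p ∈ primesLE x, ∑ r ∈ range N,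
      ((r + 2 : ℕ) : ℝ) * log p * (‖g (p ^ (r + 2))‖ / (p : ℝ) ^ (r + 2)) ≤ B := by
  refine ⟨_, ENNReal.toReal_nonneg, fun x N =>
    sum_le_toReal_tsum_primes (fun p => prime_of_mem_primesLE) (tsum_secondTerm_ne_top hB)
      fun p hp => ?_⟩
  have hlog : 0 ≤ log p := log_nonneg (by exact_mod_cast hp.one_le)
  rw [ENNReal.ofReal_sum_of_nonneg fun _ _ => by positivity]
  refine (sum_le_sum fun r _ => le_of_eq ?_).trans (ENNReal.sum_le_tsum _)
  have hlog_pow : log ((p ^ (r + 2) : ℕ) : ℝ) = ((r + 2 : ℕ) : ℝ) * log p := by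
    rw [Nat.cast_pow, log_pow]
  rw [ENNReal.ofReal_mul (by positivity), ofReal_norm_div_pow g hp.pos, hlog_pow]
  simp only [div_eq_mul_inv]
  ring

lemma exists_summable_and_sum_tsum_le (hB : CondB g) :
    ∃ B ≥ 0, (∀ p : ℕ, p.Prime → Summable fun r => ‖g (p ^ r)‖ / (p : ℝ) ^ r) ∧
      ∀ x : ℝ, ∑ p ∈ primesLE x, ∑' r, ‖g (p ^ (r + 2))‖ / (p : ℝ) ^ (r + 2) ≤ B := by
  obtain ⟨B, hB0, hsum⟩ := exists_sum_second_le hB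
  set c : ℕ → ℕ → ℝ := fun p r => ‖g (p ^ (r + 2))‖ / (p : ℝ) ^ (r + 2)
  have hc0 : ∀ p r, 0 ≤ c p r := fun _ _ => by positivity
  have hc : ∀ x N, ∑ p ∈ primesLE x, ∑ r ∈ range N, c p r ≤ B := by
    refine fun x N => (sum_le_sum fun p hp => sum_le_sum fun r _ => ?_).trans (hsum x N)
    have h2p : (2 : ℝ) ≤ p := by exact_mod_cast (prime_of_mem_primesLE hp).two_le
    have hlog : (1 : ℝ) ≤ ((r + 2 : ℕ) : ℝ) * log p := by
      have := log_two_gt_d9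
      have := log_le_log two_pos h2p
      push_cast
      nlinarith [(r.cast_nonneg : (0 : ℝ) ≤ r)]
    exact le_mul_of_one_le_left (hc0 p r) hlog
  have hsummable : ∀ p : ℕ, p.Prime → Summable (c p) := fun p hp =>
    summable_of_sum_range_le (hc0 p) fun N =>
      (single_le_sum (f := fun q => ∑ r ∈ range N, c q r)
        (fun q _ => sum_nonneg fun r _ => hc0 q r)
        ((mem_primesLE (by positivity)).mpr ⟨hp, le_rfl⟩)).trans (hc p N)
  refine ⟨B, hB0, fun p hp => (summable_nat_add_iff 2).mp (hsummable p hp), fun x => ?_⟩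
  rw [← Summable.tsum_finsetSum fun p hp => hsummable p (prime_of_mem_primesLE hp)]
  exact Real.tsum_le_of_sum_range_le (fun _ => sum_nonneg fun p _ => hc0 p _)
    fun N => by rw [sum_comm]; exact hc x N

end CondB

lemma sum_Icc_le_prod_primesBelow_tsum {f : ℕ → ℝ} (hf0 : ∀ n, 0 ≤ f n) (hf1 : f 1 = 1)
    (hmul : ∀ m n : ℕ, m.Coprime n → f (m * n) = f m * f n)
    (hsum : ∀ p : ℕ, p.Prime → Summable fun r => f (p ^ r)) (N : ℕ) :
    ∑ n ∈ Icc 1 N, f n ≤ ∏ p ∈ (N + 1).primesBelow, ∑' r, f (p ^ r) := by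
  have hsmooth : ∀ n ∈ Icc 1 N, n ∈ (N + 1).smoothNumbers := fun n hn => by
    rw [mem_Icc] at hn
    exact Nat.mem_smoothNumbers_of_lt (by omega) (by omega)
  rw [← sum_subtype_of_mem f hsmooth]
  refine sum_le_hasSum _ (fun _ _ => hf0 _)
    (EulerProduct.summable_and_hasSum_smoothNumbers_prod_primesBelow_tsum hf1 (hmul _ _)
      (fun hp => ?_) (N + 1)).2
  simpa only [Real.norm_of_nonneg (hf0 _)] using hsum _ hp

lemma tsum_pow_le_mul_exp {f : ℕ → ℝ} (hf0 : ∀ n, 0 ≤ f n) (hf1 : f 1 = 1) {p : ℕ}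
    (hs : Summable fun r => f (p ^ r)) :
    ∑' r, f (p ^ r) ≤ (1 + f p) * exp (∑' r, f (p ^ (r + 2))) := by
  have ht : 0 ≤ ∑' r, f (p ^ (r + 2)) := tsum_nonneg fun _ => hf0 _
  rw [hs.tsum_eq_zero_add, ((summable_nat_add_iff 1).mpr hs).tsum_eq_zero_add]
  simp only [pow_zero, hf1, zero_add, pow_one]
  nlinarith [add_one_le_exp (∑' r, f (p ^ (r + 2))), hf0 p]

lemma exists_normMg_le_log_rpow {g : ℕ → ℂ} {β : ℝ} (hg : IsMult g) (hB : CondB g)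
    (hC : CondC g β) : ∃ C, ∀ x : ℝ, 2 ≤ x → normMg g x ≤ C * log x ^ β := by
  obtain ⟨B, -, hsum, htail⟩ := hB.exists_summable_and_sum_tsum_le
  obtain ⟨C, hC⟩ := hC
  set f : ℕ → ℝ := fun n => ‖g n‖ / n with hf
  have hf0 : ∀ n, 0 ≤ f n := fun _ => by positivity
  have hf1 : f 1 = 1 := by simp [hf, hg.1]
  have hfpow : ∀ p r : ℕ, f (p ^ r) = ‖g (p ^ r)‖ / (p : ℝ) ^ r := by simp [hf]
  have hfsum : ∀ p : ℕ, p.Prime → Summable fun r => f (p ^ r) := fun p hp => by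
    simpa only [hfpow] using hsum p hp
  have hfmul : ∀ m n : ℕ, m.Coprime n → f (m * n) = f m * f n := fun m n h => by
    simp only [hf, hg.2 m n h, norm_mul, Nat.cast_mul, mul_div_mul_comm]
  refine ⟨exp B * C, fun x hx => ?_⟩
  calc normMg g x = ∑ n ∈ Icc 1 ⌊x⌋₊, f n := rfl
    _ ≤ ∏ p ∈ primesLE x, ∑' r, f (p ^ r) :=
        sum_Icc_le_prod_primesBelow_tsum hf0 hf1 hfmul hfsum _
    _ ≤ ∏ p ∈ primesLE x, (1 + f p) * exp (∑' r, f (p ^ (r + 2))) :=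
        prod_le_prod (fun _ _ => tsum_nonneg fun _ => hf0 _) fun p hp =>
          tsum_pow_le_mul_exp hf0 hf1 (hfsum p (prime_of_mem_primesLE hp))
    _ = exp (∑ p ∈ primesLE x, ∑' r, f (p ^ (r + 2))) * ∏ p ∈ primesLE x, (1 + f p) := by
        rw [prod_mul_distrib, exp_sum, mul_comm]
    _ ≤ exp B * (C * log x ^ β) := by
        gcongr
        · simpa only [hfpow] using htail x
        · exact hC x hx
    _ = exp B * C * log x ^ β := by ring

section MainEstimate

variable {g : ℕ → ℂ}

lemma norm_log_mul_sum_higher_le {p : ℕ} (hp : p.Prime) {x : ℝ} (hx : 0 ≤ x) (M : ℕ) :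
    ‖(log p : ℂ) * ∑ r ∈ range M, ((r + 2 : ℕ) : ℂ) * (g (p ^ (r + 2)) / (p : ℂ) ^ (r + 2)) *
        sumCoprime g p (x / (p : ℝ) ^ (r + 2))‖ ≤
      (∑ r ∈ range M, ((r + 2 : ℕ) : ℝ) * log p * (‖g (p ^ (r + 2))‖ / (p : ℝ) ^ (r + 2))) *
        normMg g x := by
  have hlog : 0 ≤ log p := log_nonneg (by exact_mod_cast hp.one_le)
  have hpow : ∀ r : ℕ, x / (p : ℝ) ^ r ≤ x := fun r =>
    div_le_self hx (one_le_pow₀ (by exact_mod_cast hp.one_le))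
  rw [norm_mul, Complex.norm_real, Real.norm_of_nonneg hlog]
  refine (mul_le_mul_of_nonneg_left
    (norm_sum_mul_sumCoprime_le _ _ p _ fun r _ => hpow (r + 2)) hlog).trans_eq ?_
  simp only [norm_mul, norm_div, norm_pow, Complex.norm_natCast, mul_sum, sum_mul]
  exact sum_congr rfl fun r _ => by ring

lemma norm_mul_sum_filter_dvd_le (hg : IsMult g) {p : ℕ} (hp : p.Prime) {x : ℝ} (hx : 0 ≤ x) :
    ‖g p * (log p : ℂ) / p * ∑ m ∈ (Icc 1 ⌊x / p⌋₊).filter (fun m => p ∣ m), g m / m‖ ≤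
      log p * (‖g p‖ / p) * (∑ r ∈ range ⌊x / p⌋₊, ‖g (p ^ (r + 1))‖ / (p : ℝ) ^ (r + 1)) *
        normMg g x := by
  have hlog : 0 ≤ log p := log_nonneg (by exact_mod_cast hp.one_le)
  rw [norm_mul, mul_assoc]
  refine le_of_eq_of_le ?_ (mul_le_mul_of_nonneg_left (norm_sum_filter_dvd_le hg hp
    (by positivity) (div_le_self hx (by exact_mod_cast hp.one_le))) (by positivity))
  rw [norm_div, norm_mul, Complex.norm_real, Real.norm_of_nonneg hlog, Complex.norm_natCast]
  ring

lemma exists_norm_sum_mul_log_sub_sum_mul_Mg_le (hg : IsMult g) (hB : CondB g) :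
    ∃ B ≥ 0, ∀ x : ℝ, 2 ≤ x →
      ‖∑ n ∈ Icc 1 ⌊x⌋₊, g n / n * (log n : ℂ) -
          ∑ p ∈ primesLE x, g p * (log p : ℂ) / p * Mg g (x / p)‖ ≤ B * normMg g x := by
  obtain ⟨B₁, hB₁, h₁⟩ := hB.exists_sum_first_le
  obtain ⟨B₂, hB₂, h₂⟩ := hB.exists_sum_second_le
  refine ⟨B₂ + B₁, by positivity, fun x hx => ?_⟩
  have hx0 : 0 ≤ x := by linarith
  have hsplit : ∀ p : ℕ, Mg g (x / p) =
      ∑ m ∈ (Icc 1 ⌊x / p⌋₊).filter (fun m => p ∣ m), g m / m + sumCoprime g p (x / p) :=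
    fun p => (sum_filter_add_sum_filter_not _ _ _).symm
  have hprime : ∑ p ∈ primesLE x, (log p : ℂ) * (g p / p * sumCoprime g p (x / p)) =
      ∑ p ∈ primesLE x, g p * (log p : ℂ) / p * sumCoprime g p (x / p) :=
    sum_congr rfl fun _ _ => by ring
  simp_rw [sum_mul_log_eq hg hx, hprime, hsplit, mul_add, sum_add_distrib]
  rw [show ∀ a b c : ℂ, a + b - (c + a) = b - c from fun _ _ _ => by ring, add_mul]
  refine (norm_sub_le _ _).trans (add_le_add ?_ ?_)
  · refine (norm_sum_le _ _).trans ((sum_le_sum fun p hp =>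
      norm_log_mul_sum_higher_le (prime_of_mem_primesLE hp) hx0 _).trans ?_)
    rw [← sum_mul]
    exact mul_le_mul_of_nonneg_right (h₂ x _) (normMg_nonneg g x)
  · refine (norm_sum_le _ _).trans ((sum_le_sum fun p hp =>
      norm_mul_sum_filter_dvd_le hg (prime_of_mem_primesLE hp) hx0).trans ?_)
    rw [← sum_mul]
    exact mul_le_mul_of_nonneg_right (h₁ x fun p => ⌊x / p⌋₊) (normMg_nonneg g x)

lemma Mg_mul_log_sub_integral_eq (hg1 : g 1 = 1) (κ : ℂ) {x : ℝ} (hx : 2 ≤ x) :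
    Mg g x * (log x : ℂ) - (κ + 1) * ∫ t in (2 : ℝ)..x, Mg g t / (t : ℂ) =
      ∑ n ∈ Icc 1 ⌊x⌋₊, g n / n * (log n : ℂ) -
        κ * ∑ n ∈ Icc 1 ⌊x⌋₊, g n / n * (log (x / n) : ℂ) + (κ + 1) * log 2 := by
  have hlog : ∀ n ∈ Icc 1 ⌊x⌋₊, g n / n * (log x : ℂ) =
      g n / n * (log n : ℂ) + g n / n * (log (x / n) : ℂ) := fun n hn => by
    have hn : (0 : ℝ) < n := by exact_mod_cast (mem_Icc.mp hn).1
    rw [log_div (by linarith) hn.ne']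
    push_cast
    ring
  rw [integral_Mg_div g hx, hg1, Mg, sum_mul, sum_congr rfl hlog, sum_add_distrib]
  ring

lemma exists_norm_Mg_mul_log_sub_integral_le {κ : ℂ} (hg : IsMult g) (hA : CondA g κ)
    (hB : CondB g) :
    ∃ C ≥ 0, ∀ x : ℝ, 2 ≤ x →
      ‖Mg g x * (log x : ℂ) - (κ + 1) * ∫ t in (2 : ℝ)..x, Mg g t / (t : ℂ)‖ ≤
        C * (normMg g x + 1) := by
  obtain ⟨B, hB0, hTP⟩ := exists_norm_sum_mul_log_sub_sum_mul_Mg_le hg hB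
  obtain ⟨C, hC0, hPW⟩ := hA.exists_bound_of_one_le
  refine ⟨B + C + (‖κ‖ + 1) * log 2, by positivity, fun x hx => ?_⟩
  set P := ∑ p ∈ primesLE x, g p * (log p : ℂ) / p * Mg g (x / p)
  have hconst : ‖(κ + 1) * (log 2 : ℂ)‖ ≤ (‖κ‖ + 1) * log 2 := by
    rw [norm_mul, Complex.norm_real, Real.norm_of_nonneg (log_nonneg one_le_two)]
    gcongr
    exact (norm_add_le _ _).trans_eq (by rw [norm_one])
  have hL := normMg_nonneg g x
  rw [Mg_mul_log_sub_integral_eq hg.1 κ hx, ← sub_add_sub_cancel _ P]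
  calc _ ≤ ‖_ - P‖ + ‖P - _‖ + ‖(κ + 1) * (log 2 : ℂ)‖ :=
        (norm_add_le _ _).trans (add_le_add (norm_add_le _ _) le_rfl)
    _ ≤ B * normMg g x + C * normMg g x + (‖κ‖ + 1) * log 2 :=
        add_le_add (add_le_add (hTP x hx) (norm_sum_mul_Mg_sub_le hPW (by linarith))) hconst
    _ ≤ _ := by
        have : 0 ≤ (‖κ‖ + 1) * log 2 := by positivity
        nlinarith

end MainEstimate

theorem stmt10 (g : ℕ → ℂ) (κ : ℂ) (β : ℝ) (hg : IsMult g)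
    (hA : CondA g κ) (hB : CondB g)
    (hβ0 : 0 ≤ β) (hC : CondC g β) :
    ∃ C : ℝ, ∀ x : ℝ, 2 ≤ x →
      ‖Mg g x * (Real.log x : ℂ) - (κ + 1) * ∫ t in (2 : ℝ)..x, Mg g t / (t : ℂ)‖ ≤
        C * Real.log x ^ β := by
  obtain ⟨C₁, hC₁, hE⟩ := exists_norm_Mg_mul_log_sub_integral_le hg hA hB
  obtain ⟨C₂, hL⟩ := exists_normMg_le_log_rpow hg hB hC
  refine ⟨C₁ * (C₂ + 1 / log 2 ^ β), fun x hx => (hE x hx).trans ?_⟩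
  have hlog2 : 0 < log 2 ^ β := rpow_pos_of_pos (log_pos one_lt_two) β
  have hone : 1 ≤ log x ^ β / log 2 ^ β := by
    rw [one_le_div hlog2]
    exact rpow_le_rpow (log_nonneg one_le_two) (log_le_log two_pos hx) hβ0
  calc C₁ * (normMg g x + 1) ≤ C₁ * (C₂ * log x ^ β + log x ^ β / log 2 ^ β) := by
        gcongr
        exact hL x hx
    _ = C₁ * (C₂ + 1 / log 2 ^ β) * log x ^ β := by ring
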